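/- Let ρ > 0 and let B be a p×p real symmetric matrix with spectral decomposition B = Q Λ Qᵀ, where Q is a p×p orthogonal matrix and Λ is the diagonal matrix with diagonal entries δ₁,…,δ_p. Define Ω := Q Λ' Qᵀ, where Λ' is the diagonal matrix with entries Λ'_{jj} = (δ_j + √(δ_j² + 4ρ))/(2ρ). Then Ω is symmetric positive definite and satisfies the first-order optimality condition ρ Ω − Ω⁻¹ = B. -/

import Mathlib

open Matrix

/-! Conjugation by the orthogonal `Q` commutes with scalar multiples, differences and inverses
of diagonal matrices, so the matrix equation `ρ Ω - Ω⁻¹ = B` reduces to the scalar equations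
`ρ x - x⁻¹ = δⱼ`, i.e. `ρ x² - δⱼ x - 1 = 0`. The eigenvalue `(δⱼ + √(δⱼ² + 4ρ)) / (2ρ)` of `Ω` is the positive root
of this quadratic, which also makes `Ω` positive definite. -/

lemma add_sqrt_sq_add_div_pos {ρ : ℝ} (hρ : 0 < ρ) (d : ℝ) :
    0 < (d + √(d ^ 2 + 4 * ρ)) / (2 * ρ) := by
  have : -d < √(d ^ 2 + 4 * ρ) := Real.lt_sqrt_of_sq_lt (by linarith)
  exact div_pos (by linarith) (by positivity)

lemma mul_sub_inv_add_sqrt_sq_add_div {ρ : ℝ} (hρ : 0 < ρ) (d : ℝ) :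
    ρ * ((d + √(d ^ 2 + 4 * ρ)) / (2 * ρ)) - ((d + √(d ^ 2 + 4 * ρ)) / (2 * ρ))⁻¹ = d := by
  set s := √(d ^ 2 + 4 * ρ)
  have hs : s ^ 2 = d ^ 2 + 4 * ρ := Real.sq_sqrt (by positivity)
  -- `(d + s) (s - d) = s² - d² = 4ρ`
  have hinv : ((d + s) / (2 * ρ))⁻¹ = (s - d) / 2 :=
    inv_eq_of_mul_eq_one_right (by field_simp; linear_combination hs)
  rw [hinv]
  field_simp
  ring

section Conjugation

variable {n : Type*} [Fintype n] [DecidableEq n]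

lemma posDef_mul_diagonal_mul_transpose {Q : Matrix n n ℝ} (hQ : Q * Qᵀ = 1) {d : n → ℝ}
    (hd : ∀ i, 0 < d i) : (Q * diagonal d * Qᵀ).PosDef := by
  have hinj : Function.Injective Q.vecMul := fun x y hxy => by
    simpa [vecMul_vecMul, hQ] using congrArg (vecMul · Qᵀ) hxy
  simpa using (posDef_diagonal_iff.mpr hd).mul_mul_conjTranspose_same hinj

lemma inv_mul_diagonal_mul_transpose {α : Type*} [Field α] {Q : Matrix n n α}
    (hQ : Q * Qᵀ = 1) (hQ' : Qᵀ * Q = 1) {d : n → α} (hd : ∀ i, d i ≠ 0) :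
    (Q * diagonal d * Qᵀ)⁻¹ = Q * diagonal (fun i => (d i)⁻¹) * Qᵀ := by
  apply inv_eq_right_inv
  have hdiag : diagonal d * diagonal (fun i => (d i)⁻¹) = 1 := by
    rw [diagonal_mul_diagonal, ← diagonal_one]
    exact congrArg diagonal (funext fun i => mul_inv_cancel₀ (hd i))
  calc Q * diagonal d * Qᵀ * (Q * diagonal (fun i => (d i)⁻¹) * Qᵀ)
      = Q * (diagonal d * (Qᵀ * Q) * diagonal (fun i => (d i)⁻¹)) * Qᵀ := by
        simp only [Matrix.mul_assoc]
    _ = 1 := by rw [hQ', Matrix.mul_one, hdiag, Matrix.mul_one, hQ]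

lemma smul_mul_diagonal_mul_sub {R : Type*} [CommRing R] (c : R) (P Q : Matrix n n R)
    (a b : n → R) :
    c • (P * diagonal a * Q) - P * diagonal b * Q = P * diagonal (fun i => c * a i - b i) * Q := by
  rw [← diagonal_sub, show (fun i => c * a i) = c • a from rfl, diagonal_smul,
    Matrix.mul_sub, Matrix.sub_mul, Matrix.mul_smul, Matrix.smul_mul]

end Conjugation

theorem stmt_7 {p : ℕ} (ρ : ℝ) (hρ : 0 < ρ)
    (B Q : Matrix (Fin p) (Fin p) ℝ) (δ : Fin p → ℝ)
    (hQ : Q * Qᵀ = 1 ∧ Qᵀ * Q = 1)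
    (hB : B = Q * Matrix.diagonal δ * Qᵀ)
    (Ω : Matrix (Fin p) (Fin p) ℝ)
    (hΩ : Ω = Q * Matrix.diagonal
      (fun j => (δ j + Real.sqrt ((δ j) ^ 2 + 4 * ρ)) / (2 * ρ)) * Qᵀ) :
    Ω.PosDef ∧ ρ • Ω - Ω⁻¹ = B := by
  have hpos := fun j => add_sqrt_sq_add_div_pos hρ (δ j)
  refine ⟨hΩ ▸ posDef_mul_diagonal_mul_transpose hQ.1 hpos, ?_⟩
  rw [hΩ, inv_mul_diagonal_mul_transpose hQ.1 hQ.2 fun j => (hpos j).ne',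
    smul_mul_diagonal_mul_sub, hB]
  simp only [mul_sub_inv_add_sqrt_sq_add_div hρ]
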